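/- arXiv:2004.14455 — 7 statements merged into one kernel-verified Lean document; each statement's English description precedes it below -/
import Mathlib

section
/- Let Θ be an N×N symmetric positive-definite real matrix and S a lower-triangular sparsity set with associated matrix class 𝒮 and column index sets s_j. Define L ∈ ℝ^{N×N} column-wise by L_{s_j,j} := Θ_{s_j,s_j}⁻¹ e₁ / √(e₁ᵀ Θ_{s_j,s_j}⁻¹ e₁) and L_{ij} := 0 for (i,j) ∉ S. Then L belongs to 𝒮, all diagonal entries of L are positive, and for every L̂ ∈ 𝒮 with positive diagonal entries one has 𝒟(Θ, (L Lᵀ)⁻¹) ≤ 𝒟(Θ, (L̂ L̂ᵀ)⁻¹); that is, L minimizes the Kullback–Leibler divergence between N(0,Θ) and N(0,(L̂L̂ᵀ)⁻¹) subject to the sparsity constraint L̂ ∈ 𝒮. -/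
open Matrix

noncomputable section

/-- The Gaussian KL functional
`𝒟(Θ₁, Θ₂) = (trace(Θ₂⁻¹ Θ₁) + log det Θ₂ − log det Θ₁ − N)/2`,
the Kullback–Leibler divergence between `N(0, Θ₁)` and `N(0, Θ₂)`. -/
def gaussKL {N : ℕ} (Θ₁ Θ₂ : Matrix (Fin N) (Fin N) ℝ) : ℝ :=
  ((Θ₂⁻¹ * Θ₁).trace + Real.log Θ₂.det - Real.log Θ₁.det - (N : ℝ)) / 2

/-- The index set `s_j = {i : (i, j) ∈ S}` of column `j`, as a subtype. -/
abbrev colIdx {N : ℕ} (S : Finset (Fin N × Fin N)) (j : Fin N) : Type :=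
  {i : Fin N // (i, j) ∈ S}

/-- The principal submatrix `Θ_{s_j, s_j}`. -/
def colSub {N : ℕ} (Θ : Matrix (Fin N) (Fin N) ℝ) (S : Finset (Fin N × Fin N))
    (j : Fin N) : Matrix (colIdx S j) (colIdx S j) ℝ :=
  Θ.submatrix Subtype.val Subtype.val

/-- The standard basis vector `e₁` of `ℝ^{s_j}` corresponding to the index `j`. -/
def colE1 {N : ℕ} (S : Finset (Fin N × Fin N)) (j : Fin N) (h : (j, j) ∈ S) :
    colIdx S j → ℝ :=
  Pi.single ⟨j, h⟩ 1

/-- The KL-optimal sparse factor `L`, defined columnwise by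
`L_{s_j, j} = Θ_{s_j,s_j}⁻¹ e₁ / √(e₁ᵀ Θ_{s_j,s_j}⁻¹ e₁)` and `L i j = 0` for `(i,j) ∉ S`. -/
def klFactor {N : ℕ} (Θ : Matrix (Fin N) (Fin N) ℝ) (S : Finset (Fin N × Fin N))
    (hdiag : ∀ i : Fin N, (i, i) ∈ S) : Matrix (Fin N) (Fin N) ℝ :=
  fun i j =>
    if h : (i, j) ∈ S then
      ((colSub Θ S j)⁻¹ *ᵥ colE1 S j (hdiag j)) ⟨i, h⟩ /
        Real.sqrt (colE1 S j (hdiag j) ⬝ᵥ ((colSub Θ S j)⁻¹ *ᵥ colE1 S j (hdiag j)))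
    else 0

/-!
Because `L` is lower triangular with positive diagonal, `log det (L Lᵀ)⁻¹ = -2 ∑ log L_jj`, and
`trace (L Lᵀ Θ) = ∑_j L_{·j}ᵀ Θ L_{·j}`. Hence `2 𝒟(Θ, (L Lᵀ)⁻¹) + log det Θ + N` is the sum over
the columns `j` of `v ↦ vᵀ Θ_{s_j,s_j} v - 2 log v_j` evaluated at `v = L_{s_j,j}`, and each column
can be optimised separately. With `A = Θ_{s_j,s_j}` and `c = (A⁻¹)_{jj}`, Cauchy–Schwarz in the
inner product `A` gives `v_j² ≤ c vᵀ A v`, so `log x ≤ x - 1` bounds the column objective below by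
`1 - log c`, which is its value at `v = A⁻¹ e₁ / √c`.
-/

section

variable {ι : Type*} [Fintype ι]

theorem Matrix.IsHermitian.dotProduct_mulVec_comm {A : Matrix ι ι ℝ} (hA : A.IsHermitian)
    (x y : ι → ℝ) : x ⬝ᵥ A *ᵥ y = y ⬝ᵥ A *ᵥ x := by
  rw [dotProduct_mulVec, dotProduct_comm, ← mulVec_transpose,
    ← conjTranspose_eq_transpose_of_trivial, hA.eq]

theorem Fintype.sum_eq_sum_subtype_of_ne_zero {M : Type*} [AddCommMonoid M] {p : ι → Prop}
    [DecidablePred p] {f : ι → M} (hf : ∀ i, f i ≠ 0 → p i) :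
    ∑ i, f i = ∑ i : Subtype p, f i := by
  rw [← Fintype.sum_subtype_add_sum_subtype p f, Fintype.sum_eq_zero (fun i : {i // ¬p i} => f i)
    fun i => not_not.mp (mt (hf i) i.2), add_zero]

theorem dotProduct_mulVec_eq_submatrix_of_ne_zero {p : ι → Prop} [DecidablePred p]
    (A : Matrix ι ι ℝ) {v : ι → ℝ} (hv : ∀ i, v i ≠ 0 → p i) :
    v ⬝ᵥ A *ᵥ v =
      (fun i : Subtype p => v i) ⬝ᵥ A.submatrix (↑) (↑) *ᵥ (fun i : Subtype p => v i) := by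
  have hAv : ∀ i, (A *ᵥ v) i = ∑ k : Subtype p, A i k * v k := fun i =>
    Fintype.sum_eq_sum_subtype_of_ne_zero fun k hk => hv k (right_ne_zero_of_mul hk)
  rw [dotProduct, Fintype.sum_eq_sum_subtype_of_ne_zero fun i hi => hv i (left_ne_zero_of_mul hi)]
  simp only [hAv]
  rfl

theorem Matrix.trace_mul_transpose_mul (M Θ : Matrix ι ι ℝ) :
    (M * Mᵀ * Θ).trace = ∑ j, M.col j ⬝ᵥ Θ *ᵥ M.col j := by
  rw [Matrix.mul_assoc, trace_mul_comm]
  simp only [trace, diag_apply, mul_apply, transpose_apply, dotProduct, mulVec, col_apply,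
    Finset.sum_mul, Finset.mul_sum]
  refine Finset.sum_congr rfl fun j _ => Finset.sum_comm.trans ?_
  simp only [mul_assoc]

theorem Matrix.log_det_inv_mul_transpose [DecidableEq ι] (M : Matrix ι ι ℝ) :
    Real.log ((M * Mᵀ)⁻¹).det = -(2 * Real.log M.det) := by
  rw [det_nonsing_inv, Ring.inverse_eq_inv', Real.log_inv, det_mul, det_transpose, ← sq,
    Real.log_pow, Nat.cast_ofNat]

end

section Column

variable {ι : Type*} [Fintype ι] [DecidableEq ι]

def colObjective (A : Matrix ι ι ℝ) (k : ι) (v : ι → ℝ) : ℝ :=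
  v ⬝ᵥ A *ᵥ v - 2 * Real.log (v k)

def optColumn (A : Matrix ι ι ℝ) (k : ι) : ι → ℝ :=
  fun i => A⁻¹ i k / √(A⁻¹ k k)

variable {A : Matrix ι ι ℝ}

theorem Matrix.PosDef.mulVec_inv_col (hA : A.PosDef) (k : ι) :
    A *ᵥ A⁻¹.col k = Pi.single k 1 := by
  rw [← mulVec_single_one, mulVec_mulVec, mul_nonsing_inv _ (isUnit_iff_ne_zero.mpr hA.det_pos.ne'),
    one_mulVec]

theorem optColumn_apply_self (k : ι) : optColumn A k k = √(A⁻¹ k k) :=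
  Real.div_sqrt

theorem optColumn_dotProduct_mulVec (hA : A.PosDef) (k : ι) :
    optColumn A k ⬝ᵥ A *ᵥ optColumn A k = 1 := by
  have hc : 0 < A⁻¹ k k := hA.inv.diag_pos
  have h : optColumn A k = (√(A⁻¹ k k))⁻¹ • A⁻¹.col k := by
    ext i; simp [optColumn, div_eq_inv_mul]
  rw [h, mulVec_smul, hA.mulVec_inv_col, dotProduct_smul, smul_dotProduct,
    dotProduct_single_one, col_apply, smul_eq_mul, smul_eq_mul, ← mul_assoc, ← mul_inv,
    Real.mul_self_sqrt hc.le, inv_mul_cancel₀ hc.ne']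

theorem colObjective_optColumn (hA : A.PosDef) (k : ι) :
    colObjective A k (optColumn A k) = 1 - Real.log (A⁻¹ k k) := by
  rw [colObjective, optColumn_dotProduct_mulVec hA, optColumn_apply_self,
    Real.log_sqrt hA.inv.diag_pos.le]
  ring

/-- Cauchy–Schwarz for the inner product `A`, applied to `v` and `A⁻¹ e_k`. -/
theorem sq_apply_le_inv_apply_mul_dotProduct_mulVec (hA : A.PosDef) (k : ι) (v : ι → ℝ) :
    v k ^ 2 ≤ A⁻¹ k k * (v ⬝ᵥ A *ᵥ v) := by
  set c := A⁻¹ k k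
  set u := A⁻¹.col k
  have hc : 0 < c := hA.inv.diag_pos
  have huv : u ⬝ᵥ A *ᵥ v = v k := by
    rw [hA.isHermitian.dotProduct_mulVec_comm, hA.mulVec_inv_col, dotProduct_single_one]
  have huu : u ⬝ᵥ A *ᵥ u = c := by
    rw [hA.mulVec_inv_col, dotProduct_single_one]
    rfl
  have hw := hA.posSemidef.dotProduct_mulVec_nonneg (c • v - v k • u)
  simp only [star_trivial, mulVec_sub, mulVec_smul, dotProduct_sub, sub_dotProduct,
    dotProduct_smul, smul_dotProduct, smul_eq_mul, huv, huu,
    hA.isHermitian.dotProduct_mulVec_comm v u] at hw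
  nlinarith

theorem one_sub_log_inv_apply_le_colObjective (hA : A.PosDef) {k : ι} {v : ι → ℝ}
    (hv : 0 < v k) : 1 - Real.log (A⁻¹ k k) ≤ colObjective A k v := by
  have hc : 0 < A⁻¹ k k := hA.inv.diag_pos
  have hq : 0 < v ⬝ᵥ A *ᵥ v := hA.dotProduct_mulVec_pos fun h => by simp [h] at hv
  have hlog : 2 * Real.log (v k) ≤ Real.log (A⁻¹ k k) + Real.log (v ⬝ᵥ A *ᵥ v) := by
    have h := Real.log_le_log (pow_pos hv 2) (sq_apply_le_inv_apply_mul_dotProduct_mulVec hA k v)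
    rwa [Real.log_pow, Real.log_mul hc.ne' hq.ne', Nat.cast_ofNat] at h
  have := Real.log_le_sub_one_of_pos hq
  rw [colObjective]
  linarith

theorem colObjective_optColumn_le (hA : A.PosDef) {k : ι} {v : ι → ℝ} (hv : 0 < v k) :
    colObjective A k (optColumn A k) ≤ colObjective A k v :=
  colObjective_optColumn hA k ▸ one_sub_log_inv_apply_le_colObjective hA hv

end Column

section GaussKL

variable {N : ℕ}

theorem gaussKL_inv_mul_transpose (Θ M : Matrix (Fin N) (Fin N) ℝ) (hM : M.det ≠ 0) :
    gaussKL Θ ((M * Mᵀ)⁻¹) =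
      (∑ j, M.col j ⬝ᵥ Θ *ᵥ M.col j - 2 * Real.log M.det - Real.log Θ.det - N) / 2 := by
  have hu : IsUnit (M * Mᵀ).det := by
    rw [det_mul, det_transpose]
    exact isUnit_iff_ne_zero.mpr (mul_ne_zero hM hM)
  rw [gaussKL, nonsing_inv_nonsing_inv _ hu, trace_mul_transpose_mul, log_det_inv_mul_transpose]
  ring

theorem gaussKL_inv_mul_transpose_eq_sum_colObjective (Θ : Matrix (Fin N) (Fin N) ℝ)
    {S : Finset (Fin N × Fin N)} (hdiag : ∀ i, (i, i) ∈ S) (hlow : ∀ i j, (i, j) ∈ S → j ≤ i)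
    {M : Matrix (Fin N) (Fin N) ℝ} (hMS : ∀ i j, M i j ≠ 0 → (i, j) ∈ S)
    (hM : ∀ i, 0 < M i i) :
    gaussKL Θ ((M * Mᵀ)⁻¹) =
      (∑ j, colObjective (colSub Θ S j) ⟨j, hdiag j⟩ (fun i => M i j) -
        Real.log Θ.det - N) / 2 := by
  have hlt : M.IsLowerTriangular := fun i j hij =>
    by_contra fun h => (hlow i j (hMS i j h)).not_gt hij
  have hdet : M.det = ∏ i, M i i := det_of_isLowerTriangular M hlt
  have hdet_pos : 0 < M.det := hdet ▸ Finset.prod_pos fun i _ => hM i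
  rw [gaussKL_inv_mul_transpose Θ M hdet_pos.ne', hdet, Real.log_prod fun i _ => (hM i).ne',
    Finset.mul_sum, ← Finset.sum_sub_distrib]
  congr
  ext j
  rw [colObjective, colSub, ← dotProduct_mulVec_eq_submatrix_of_ne_zero Θ (hMS · j)]
  rfl

end GaussKL

theorem klFactor_apply_of_mem {N : ℕ} (Θ : Matrix (Fin N) (Fin N) ℝ) {S : Finset (Fin N × Fin N)}
    (hdiag : ∀ i, (i, i) ∈ S) {i j : Fin N} (h : (i, j) ∈ S) :
    klFactor Θ S hdiag i j = optColumn (colSub Θ S j) ⟨j, hdiag j⟩ ⟨i, h⟩ := by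
  simp only [klFactor, dif_pos h, optColumn, colE1, mulVec_single_one, single_one_dotProduct,
    col_apply]

/-- For `Θ` symmetric positive definite and `S` a lower-triangular
sparsity set, the matrix `L` defined columnwise by
`L_{s_j,j} = Θ_{s_j,s_j}⁻¹ e₁ / √(e₁ᵀ Θ_{s_j,s_j}⁻¹ e₁)` (zero outside `S`) belongs to the
sparsity class `𝒮`, has positive diagonal entries, and minimizes the Gaussian KL divergence
`𝒟(Θ, (L̂ L̂ᵀ)⁻¹)` over all `L̂ ∈ 𝒮` with positive diagonal entries. -/
theorem klFactor_mem_and_posDiag_and_isMinOn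
    {N : ℕ} (Θ : Matrix (Fin N) (Fin N) ℝ) (hΘ : Θ.PosDef)
    (S : Finset (Fin N × Fin N))
    (hdiag : ∀ i : Fin N, (i, i) ∈ S)
    (hlow : ∀ i j : Fin N, (i, j) ∈ S → j ≤ i) :
    (∀ i j : Fin N, klFactor Θ S hdiag i j ≠ 0 → (i, j) ∈ S) ∧
    (∀ i : Fin N, 0 < klFactor Θ S hdiag i i) ∧
    (∀ L' : Matrix (Fin N) (Fin N) ℝ,
        (∀ i j : Fin N, L' i j ≠ 0 → (i, j) ∈ S) →
        (∀ i : Fin N, 0 < L' i i) →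
        gaussKL Θ ((klFactor Θ S hdiag * (klFactor Θ S hdiag)ᵀ)⁻¹) ≤
          gaussKL Θ ((L' * L'ᵀ)⁻¹)) := by
  have hsub : ∀ j, (colSub Θ S j).PosDef := fun j => hΘ.submatrix Subtype.val_injective
  have hmem : ∀ i j, klFactor Θ S hdiag i j ≠ 0 → (i, j) ∈ S := fun i j hij =>
    by_contra fun h => hij (dif_neg h)
  have hpos : ∀ i, 0 < klFactor Θ S hdiag i i := fun i => by
    rw [klFactor_apply_of_mem Θ hdiag (hdiag i), optColumn_apply_self]
    exact Real.sqrt_pos.mpr (hsub i).inv.diag_pos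
  refine ⟨hmem, hpos, fun L' hL'S hL'pos => ?_⟩
  rw [gaussKL_inv_mul_transpose_eq_sum_colObjective Θ hdiag hlow hmem hpos,
    gaussKL_inv_mul_transpose_eq_sum_colObjective Θ hdiag hlow hL'S hL'pos]
  gcongr with j
  have hcol : (fun i : colIdx S j => klFactor Θ S hdiag i j) =
      optColumn (colSub Θ S j) ⟨j, hdiag j⟩ :=
    funext fun i => klFactor_apply_of_mem Θ hdiag i.2
  rw [hcol]
  exact colObjective_optColumn_le (hsub j) (hL'pos j)

end
end

section
/- Let Θ be an N×N symmetric positive-definite real matrix and S a lower-triangular sparsity set. Then for every L̂ ∈ 𝒮 with positive diagonal entries, the KL objective decomposes column-wise: 2·𝒟(Θ, (L̂ L̂ᵀ)⁻¹) = Σ_{j=1}^{N} ( L̂_{s_j,j}ᵀ Θ_{s_j,s_j} L̂_{s_j,j} − 2 log L̂_{jj} ) − log det Θ − N, where L̂_{s_j,j} ∈ ℝ^{s_j} denotes the vector of (possibly) nonzero entries of the j-th column of L̂. -/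
open Matrix

noncomputable section

/-!
As the second argument is `(L̂L̂ᵀ)⁻¹`, the trace term is `trace(L̂L̂ᵀ Θ) = trace(L̂ᵀ Θ L̂)`, the
sum over `j` of the quadratic forms `L̂_{:,j}ᵀ Θ L̂_{:,j}`, and each of these only sees the
principal block `Θ_{s_j,s_j}` because the column `L̂_{:,j}` is supported in `s_j`. Since `L̂` is
lower triangular, `log det (L̂L̂ᵀ) = 2 log det L̂ = 2 Σ_j log L̂_{jj}`.
-/

theorem Fintype.sum_subtype_of_ne_zero {ι M : Type*} [Fintype ι] [AddCommMonoid M]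
    {p : ι → Prop} [DecidablePred p] (f : ι → M) (hf : ∀ i, f i ≠ 0 → p i) :
    ∑ i : Subtype p, f i = ∑ i, f i := by
  rw [← Finset.subtype_univ, Finset.sum_subtype_eq_sum_filter]
  exact Finset.sum_filter_of_ne fun i _ => hf i

namespace Matrix

variable {ι R : Type*} [Fintype ι]

theorem dotProduct_submatrix_mulVec_of_ne_zero [CommSemiring R] {p : ι → Prop} [DecidablePred p]
    (A : Matrix ι ι R) (v : ι → R) (hv : ∀ i, v i ≠ 0 → p i) :
    (fun i : Subtype p => v i) ⬝ᵥ
        (A.submatrix Subtype.val Subtype.val *ᵥ fun i : Subtype p => v i) = v ⬝ᵥ (A *ᵥ v) := by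
  have hmulVec : (A.submatrix Subtype.val Subtype.val *ᵥ fun i : Subtype p => v i) =
      fun i : Subtype p => (A *ᵥ v) i :=
    funext fun i => Fintype.sum_subtype_of_ne_zero (fun k => A i k * v k)
      fun k hk => hv k (right_ne_zero_of_mul hk)
  rw [hmulVec]
  exact Fintype.sum_subtype_of_ne_zero (fun i => v i * (A *ᵥ v) i)
    fun i hi => hv i (left_ne_zero_of_mul hi)

theorem trace_transpose_mul_mul [CommSemiring R] (A B : Matrix ι ι R) :
    (Aᵀ * B * A).trace = ∑ j, (fun i => A i j) ⬝ᵥ (B *ᵥ fun i => A i j) := by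
  refine Finset.sum_congr rfl fun j _ => ?_
  rw [diag_apply, mul_apply', dotProduct_mulVec]
  rfl

theorem log_det_mul_transpose [DecidableEq ι] (L : Matrix ι ι ℝ) :
    Real.log (L * Lᵀ).det = 2 * Real.log L.det := by
  rw [det_mul, det_transpose, ← sq, Real.log_pow, Nat.cast_ofNat]

end Matrix

theorem two_mul_gaussKL_inv {N : ℕ} (Θ₁ Θ₂ : Matrix (Fin N) (Fin N) ℝ) (h : IsUnit Θ₂.det) :
    2 * gaussKL Θ₁ Θ₂⁻¹ = (Θ₂ * Θ₁).trace - Real.log Θ₂.det - Real.log Θ₁.det - N := by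
  rw [gaussKL, nonsing_inv_nonsing_inv Θ₂ h, det_nonsing_inv, Ring.inverse_eq_inv', Real.log_inv]
  ring

theorem gaussKL_columnwise_decomposition_general
    {N : ℕ} (Θ : Matrix (Fin N) (Fin N) ℝ)
    (S : Finset (Fin N × Fin N))
    (hlow : ∀ i j : Fin N, (i, j) ∈ S → j ≤ i)
    (L' : Matrix (Fin N) (Fin N) ℝ)
    (hsp : ∀ i j : Fin N, L' i j ≠ 0 → (i, j) ∈ S)
    (hpos : ∀ i : Fin N, 0 < L' i i) :
    2 * gaussKL Θ ((L' * L'ᵀ)⁻¹) =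
      (∑ j : Fin N,
        ((fun i : colIdx S j => L' i.val j) ⬝ᵥ
            (colSub Θ S j *ᵥ fun i : colIdx S j => L' i.val j)
          - 2 * Real.log (L' j j)))
      - Real.log Θ.det - (N : ℝ) := by
  classical
  have hlower : L'.IsLowerTriangular := fun i j hij =>
    by_contra fun hne => (hlow i j (hsp i j hne)).not_gt hij
  have hdet : L'.det = ∏ j, L' j j := det_of_isLowerTriangular L' hlower
  have hdet_pos : 0 < L'.det := hdet ▸ Finset.prod_pos fun j _ => hpos j
  have hunit : IsUnit (L' * L'ᵀ).det := by
    rw [det_mul, det_transpose]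
    exact (hdet_pos.ne'.isUnit).mul hdet_pos.ne'.isUnit
  have hcol (j : Fin N) :
      (fun i : colIdx S j => L' i.val j) ⬝ᵥ (colSub Θ S j *ᵥ fun i : colIdx S j => L' i.val j) =
        (fun i => L' i j) ⬝ᵥ (Θ *ᵥ fun i => L' i j) :=
    dotProduct_submatrix_mulVec_of_ne_zero Θ (fun i => L' i j) fun i => hsp i j
  have htrace : (L' * L'ᵀ * Θ).trace = ∑ j, (fun i => L' i j) ⬝ᵥ (Θ *ᵥ fun i => L' i j) := by
    rw [mul_assoc, trace_mul_comm, trace_transpose_mul_mul]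
  have hlogdet : Real.log (L' * L'ᵀ).det = 2 * ∑ j, Real.log (L' j j) := by
    rw [log_det_mul_transpose, hdet, Real.log_prod fun j _ => (hpos j).ne']
  rw [two_mul_gaussKL_inv Θ _ hunit, htrace, hlogdet, Finset.sum_sub_distrib, ← Finset.mul_sum]
  simp only [hcol]

/-- Columnwise decomposition of the KL objective: for every `L̂ ∈ 𝒮`
with positive diagonal entries,
`2 𝒟(Θ, (L̂L̂ᵀ)⁻¹) = Σ_j ( L̂_{s_j,j}ᵀ Θ_{s_j,s_j} L̂_{s_j,j} − 2 log L̂_{jj} ) − log det Θ − N`. -/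
theorem gaussKL_columnwise_decomposition
    {N : ℕ} (Θ : Matrix (Fin N) (Fin N) ℝ) (hΘ : Θ.PosDef)
    (S : Finset (Fin N × Fin N))
    (hdiag : ∀ i : Fin N, (i, i) ∈ S)
    (hlow : ∀ i j : Fin N, (i, j) ∈ S → j ≤ i)
    (L' : Matrix (Fin N) (Fin N) ℝ)
    (hsp : ∀ i j : Fin N, L' i j ≠ 0 → (i, j) ∈ S)
    (hpos : ∀ i : Fin N, 0 < L' i i) :
    2 * gaussKL Θ ((L' * L'ᵀ)⁻¹) =
      (∑ j : Fin N,
        ((fun i : colIdx S j => L' i.val j) ⬝ᵥ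
            (colSub Θ S j *ᵥ fun i : colIdx S j => L' i.val j)
          - 2 * Real.log (L' j j)))
      - Real.log Θ.det - (N : ℝ) :=
  gaussKL_columnwise_decomposition_general Θ S hlow L' hsp hpos

end
end

section
/- Let Θ be an N×N symmetric positive-definite real matrix, S a lower-triangular sparsity set, and L the KL-optimal factor defined by L_{s_j,j} := Θ_{s_j,s_j}⁻¹ e₁ / √(e₁ᵀ Θ_{s_j,s_j}⁻¹ e₁) and zeros outside S. Then the minimal KL divergence has the closed form 2·𝒟(Θ, (L Lᵀ)⁻¹) = − Σ_{j=1}^{N} log( e₁ᵀ Θ_{s_j,s_j}⁻¹ e₁ ) − log det Θ. -/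
open Matrix

noncomputable section

/-!
Column `j` of `L` is `Θ_{s_j,s_j}⁻¹ e₁` scaled so that its `Θ`-quadratic form is `1`;
hence every diagonal entry of `Lᵀ Θ L` is `1` and `trace((L Lᵀ) Θ) = N`. Since `L` is lower
triangular with `L_jj = √(e₁ᵀ Θ_{s_j,s_j}⁻¹ e₁)`, `det(L Lᵀ) = ∏_j e₁ᵀ Θ_{s_j,s_j}⁻¹ e₁`, and
substituting both into `𝒟` gives the closed form.
-/

lemma Fintype.sum_dite_zero {ι R : Type*} [Fintype ι] [AddCommMonoid R] {p : ι → Prop}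
    [DecidablePred p] (f : ∀ i, p i → R) :
    ∑ i, (if h : p i then f i h else 0) = ∑ i : Subtype p, f i i.2 := by
  rw [← Fintype.sum_subtype_add_sum_subtype p fun i => if h : p i then f i h else 0]
  have hp : ∀ i : Subtype p, (if h : p i then f i h else 0) = f i i.2 :=
    fun i => dif_pos i.2
  have hnp : ∀ i : {i // ¬p i}, (if h : p i then f i h else 0) = 0 := fun i => dif_neg i.2
  simp only [hp, hnp, Finset.sum_const_zero, add_zero]

lemma Matrix.dite_dotProduct_mulVec_dite {ι R : Type*} [Fintype ι] [CommSemiring R]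
    {p : ι → Prop} [DecidablePred p] (A : Matrix ι ι R) (x : Subtype p → R) :
    (fun i => if h : p i then x ⟨i, h⟩ else 0) ⬝ᵥ
        (A *ᵥ fun i => if h : p i then x ⟨i, h⟩ else 0) =
      x ⬝ᵥ (A.submatrix Subtype.val Subtype.val *ᵥ x) := by
  simp only [dotProduct, mulVec, dite_mul, mul_dite, zero_mul, mul_zero, Fintype.sum_dite_zero,
    submatrix_apply]

lemma Matrix.transpose_mul_mul_apply_self {n R : Type*} [Fintype n] [CommSemiring R]
    (L A : Matrix n n R) (j : n) :
    (Lᵀ * A * L) j j = (fun i => L i j) ⬝ᵥ (A *ᵥ fun i => L i j) := by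
  rw [Matrix.mul_assoc]
  rfl

lemma Matrix.div_sqrt_dotProduct_mulVec_div_sqrt {ι : Type*} [Fintype ι] [DecidableEq ι]
    {M : Matrix ι ι ℝ} (hM : IsUnit M.det) {e : ι → ℝ} (he : 0 < e ⬝ᵥ (M⁻¹ *ᵥ e)) :
    (fun i => (M⁻¹ *ᵥ e) i / √(e ⬝ᵥ (M⁻¹ *ᵥ e))) ⬝ᵥ
        (M *ᵥ fun i => (M⁻¹ *ᵥ e) i / √(e ⬝ᵥ (M⁻¹ *ᵥ e))) = 1 := by
  set a := e ⬝ᵥ (M⁻¹ *ᵥ e)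
  have hv : (fun i => (M⁻¹ *ᵥ e) i / √a) = (√a)⁻¹ • (M⁻¹ *ᵥ e) := by
    ext i
    simp [div_eq_inv_mul]
  have hMv : M *ᵥ (M⁻¹ *ᵥ e) = e := by rw [mulVec_mulVec, mul_nonsing_inv _ hM, one_mulVec]
  rw [hv, mulVec_smul, hMv, smul_dotProduct, dotProduct_smul, dotProduct_comm, smul_eq_mul,
    smul_eq_mul, ← mul_assoc, ← mul_inv, Real.mul_self_sqrt he.le, inv_mul_cancel₀ he.ne']

section KLFactor

variable {N : ℕ} {Θ : Matrix (Fin N) (Fin N) ℝ} (S : Finset (Fin N × Fin N))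
  (hdiag : ∀ i : Fin N, (i, i) ∈ S)

variable (Θ) in
def klPivot (j : Fin N) : ℝ :=
  colE1 S j (hdiag j) ⬝ᵥ ((colSub Θ S j)⁻¹ *ᵥ colE1 S j (hdiag j))

variable (Θ) in
lemma klPivot_eq_inv_apply (j : Fin N) :
    klPivot Θ S hdiag j = (colSub Θ S j)⁻¹ ⟨j, hdiag j⟩ ⟨j, hdiag j⟩ := by
  simp [klPivot, colE1]

lemma klPivot_pos (hΘ : Θ.PosDef) (j : Fin N) : 0 < klPivot Θ S hdiag j :=
  klPivot_eq_inv_apply Θ S hdiag j ▸ (hΘ.submatrix Subtype.val_injective).inv.diag_pos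

lemma klFactor_apply_self (j : Fin N) :
    klFactor Θ S hdiag j j = √(klPivot Θ S hdiag j) := by
  rw [klFactor, dif_pos (hdiag j), ← Real.div_sqrt (x := klPivot Θ S hdiag j)]
  simp [klPivot, colE1]

lemma klFactor_isLowerTriangular (hlow : ∀ i j : Fin N, (i, j) ∈ S → j ≤ i) :
    (klFactor Θ S hdiag).IsLowerTriangular := fun i j hij =>
  dif_neg fun hS => absurd hij (not_lt.2 (hlow i j hS))

lemma det_klFactor_mul_transpose (hΘ : Θ.PosDef)
    (hlow : ∀ i j : Fin N, (i, j) ∈ S → j ≤ i) :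
    (klFactor Θ S hdiag * (klFactor Θ S hdiag)ᵀ).det = ∏ j, klPivot Θ S hdiag j := by
  rw [det_mul, det_transpose,
    det_of_isLowerTriangular _ (klFactor_isLowerTriangular S hdiag hlow), ← Finset.prod_mul_distrib]
  refine Finset.prod_congr rfl fun j _ => ?_
  rw [klFactor_apply_self S hdiag, Real.mul_self_sqrt (klPivot_pos S hdiag hΘ j).le]

lemma transpose_klFactor_mul_mul_klFactor_apply_self (hΘ : Θ.PosDef) (j : Fin N) :
    ((klFactor Θ S hdiag)ᵀ * Θ * klFactor Θ S hdiag) j j = 1 := by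
  rw [transpose_mul_mul_apply_self]
  exact (dite_dotProduct_mulVec_dite Θ _).trans <|
    div_sqrt_dotProduct_mulVec_div_sqrt
      (hΘ.submatrix Subtype.val_injective).det_pos.ne'.isUnit (klPivot_pos S hdiag hΘ j)

lemma trace_klFactor_mul_transpose_mul (hΘ : Θ.PosDef) :
    (klFactor Θ S hdiag * (klFactor Θ S hdiag)ᵀ * Θ).trace = N := by
  rw [trace_mul_cycle, trace_mul_cycle, trace]
  simp [transpose_klFactor_mul_mul_klFactor_apply_self S hdiag hΘ]

end KLFactor

/-- Closed form of the minimal KL divergence attained by the KL-optimal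
factor `L`: `2 𝒟(Θ, (L Lᵀ)⁻¹) = − Σ_j log( e₁ᵀ Θ_{s_j,s_j}⁻¹ e₁ ) − log det Θ`. -/
theorem gaussKL_klFactor_closed_form
    {N : ℕ} (Θ : Matrix (Fin N) (Fin N) ℝ) (hΘ : Θ.PosDef)
    (S : Finset (Fin N × Fin N))
    (hdiag : ∀ i : Fin N, (i, i) ∈ S)
    (hlow : ∀ i j : Fin N, (i, j) ∈ S → j ≤ i) :
    2 * gaussKL Θ ((klFactor Θ S hdiag * (klFactor Θ S hdiag)ᵀ)⁻¹) =
      - (∑ j : Fin N,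
          Real.log (colE1 S j (hdiag j) ⬝ᵥ ((colSub Θ S j)⁻¹ *ᵥ colE1 S j (hdiag j))))
      - Real.log Θ.det := by
  have hdet := det_klFactor_mul_transpose S hdiag hΘ hlow
  have hpos := klPivot_pos S hdiag hΘ
  have hunit : IsUnit (klFactor Θ S hdiag * (klFactor Θ S hdiag)ᵀ).det :=
    hdet ▸ (Finset.prod_pos fun j _ => hpos j).ne'.isUnit
  rw [gaussKL, nonsing_inv_nonsing_inv _ hunit, trace_klFactor_mul_transpose_mul S hdiag hΘ,
    det_nonsing_inv, Ring.inverse_eq_inv', Real.log_inv, hdet,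
    Real.log_prod fun j _ => (hpos j).ne']
  simp only [klPivot]
  ring

end
end

section
/- Let Θ be an N×N symmetric positive-definite real matrix with smallest eigenvalue λ_min and largest eigenvalue λ_max, set A := Θ⁻¹, and let L be any invertible N×N real matrix with L Lᵀ = A. Then for every N×N real matrix M, λ_min · ‖A − M Mᵀ‖_F ≤ ‖Id − L⁻¹ M Mᵀ L⁻ᵀ‖_F ≤ λ_max · ‖A − M Mᵀ‖_F. -/
/-!
Write `D = Θ⁻¹ - M Mᵀ` and `K = L⁻¹`. Then `Id - L⁻¹ M Mᵀ L⁻ᵀ = K D Kᵀ` and `Kᵀ K = Θ`, so by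
cyclicity of the trace `‖K D Kᵀ‖_F² = tr (D Θ D Θ)`. In an orthonormal eigenbasis of `Θ`, where
`D` becomes the symmetric matrix `E`, this is `Σ λᵢ λⱼ Eᵢⱼ²`, while `‖D‖_F² = Σ Eᵢⱼ²`; the
bounds `λ_min² ≤ λᵢ λⱼ ≤ λ_max²` finish the proof.
-/

open Matrix

noncomputable section

/-- The Frobenius norm `‖X‖_F = √(Σ_{i,j} X_{ij}²)` of a real matrix. -/
def frobNorm {n m : Type*} [Fintype n] [Fintype m] (X : Matrix n m ℝ) : ℝ :=
  Real.sqrt (∑ i : n, ∑ j : m, (X i j) ^ 2)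

lemma sum_sum_mul_mul_bounds {n : Type*} [Fintype n] {a b : ℝ} (ha : 0 ≤ a) {w : n → ℝ}
    (hlo : ∀ i, a ≤ w i) (hhi : ∀ i, w i ≤ b) {c : n → n → ℝ} (hc : ∀ i j, 0 ≤ c i j) :
    a ^ 2 * ∑ i, ∑ j, c i j ≤ ∑ i, ∑ j, w i * w j * c i j ∧
      ∑ i, ∑ j, w i * w j * c i j ≤ b ^ 2 * ∑ i, ∑ j, c i j := by
  have hw : ∀ i, 0 ≤ w i := fun i => ha.trans (hlo i)
  simp only [Finset.mul_sum, sq]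
  constructor <;>
    refine Finset.sum_le_sum fun i _ => Finset.sum_le_sum fun j _ =>
      mul_le_mul_of_nonneg_right ?_ (hc i j)
  · exact mul_le_mul (hlo i) (hlo j) ha (hw i)
  · exact mul_le_mul (hhi i) (hhi j) (hw j) ((hw i).trans (hhi i))

section

variable {n : Type*} [Fintype n]

lemma frobNorm_nonneg {m : Type*} [Fintype m] (X : Matrix n m ℝ) : 0 ≤ frobNorm X :=
  Real.sqrt_nonneg _

lemma frobNorm_sq {m : Type*} [Fintype m] (X : Matrix n m ℝ) :
    frobNorm X ^ 2 = trace (X * Xᵀ) := by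
  rw [frobNorm, Real.sq_sqrt (by positivity)]
  simp [trace, mul_apply, sq]

lemma trace_mul_self_eq_sum (E : Matrix n n ℝ) :
    trace (E * E) = ∑ i, ∑ j, E i j * E j i := by
  simp only [trace, diag, mul_apply]

lemma trace_conj_mul_conj_transpose {K D : Matrix n n ℝ} (hD : D.IsSymm) :
    trace (K * D * Kᵀ * (K * D * Kᵀ)ᵀ) = trace (D * (Kᵀ * K) * (D * (Kᵀ * K))) := by
  rw [transpose_mul, transpose_mul, transpose_transpose, hD.eq]
  simp only [mul_assoc]
  rw [trace_mul_comm]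
  simp only [mul_assoc]

variable [DecidableEq n]

lemma trace_star_mul_mul_unitary {U : Matrix n n ℝ} (hU : U ∈ unitaryGroup n ℝ)
    (X : Matrix n n ℝ) : trace (star U * X * U) = trace X := by
  rw [trace_mul_cycle, (mem_unitaryGroup_iff).1 hU, one_mul]

lemma trace_mul_diagonal_mul_mul_diagonal (E : Matrix n n ℝ) (d : n → ℝ) :
    trace (E * diagonal d * (E * diagonal d)) = ∑ i, ∑ j, d i * d j * (E i j * E j i) := by
  rw [trace_mul_self_eq_sum]
  simp only [mul_diagonal]
  rw [Finset.sum_comm]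
  exact Finset.sum_congr rfl fun i _ => Finset.sum_congr rfl fun j _ => by ring

theorem frobNorm_mul_mul_transpose_bounds {Θ K D : Matrix n n ℝ} (hΘ : Θ.IsHermitian)
    (hK : Kᵀ * K = Θ) (hD : D.IsSymm) {a b : ℝ} (ha : 0 ≤ a) (hab : a ≤ b)
    (hlo : ∀ i, a ≤ hΘ.eigenvalues i) (hhi : ∀ i, hΘ.eigenvalues i ≤ b) :
    a * frobNorm D ≤ frobNorm (K * D * Kᵀ) ∧ frobNorm (K * D * Kᵀ) ≤ b * frobNorm D := by
  set U := hΘ.eigenvectorUnitary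
  have conj_mul (X Y : Matrix n n ℝ) :
      star (U : Matrix n n ℝ) * (X * Y) * U =
        (star (U : Matrix n n ℝ) * X * U) * (star (U : Matrix n n ℝ) * Y * U) := by
    simpa using map_mul (Unitary.conjStarAlgAut ℝ _ (star U)) X Y
  have conj_Θ : star (U : Matrix n n ℝ) * Θ * U = diagonal hΘ.eigenvalues := by
    simpa using hΘ.conjStarAlgAut_star_eigenvectorUnitary
  set E := star (U : Matrix n n ℝ) * D * U
  have hE (i j : n) : E i j * E j i = E i j ^ 2 := by
    have hE_symm : Eᵀ = E := by
      simp [E, transpose_mul, hD.eq, star_eq_conjTranspose, mul_assoc]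
    rw [← transpose_apply E i j, hE_symm, sq]
  have hD_sq : frobNorm D ^ 2 = ∑ i, ∑ j, E i j * E j i := by
    rw [frobNorm_sq, hD.eq, ← trace_mul_self_eq_sum, ← conj_mul,
      trace_star_mul_mul_unitary U.2]
  have hKDK_sq : frobNorm (K * D * Kᵀ) ^ 2 =
      ∑ i, ∑ j, hΘ.eigenvalues i * hΘ.eigenvalues j * (E i j * E j i) := by
    rw [frobNorm_sq, trace_conj_mul_conj_transpose hD, hK, ← trace_star_mul_mul_unitary U.2,
      conj_mul, conj_mul, conj_Θ, trace_mul_diagonal_mul_mul_diagonal]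
  obtain ⟨hlow, hup⟩ :=
    sum_sum_mul_mul_bounds ha hlo hhi fun i j => (hE i j).symm ▸ sq_nonneg (E i j)
  rw [← hD_sq, ← hKDK_sq, ← mul_pow] at hlow hup
  have hb : 0 ≤ b := ha.trans hab
  exact ⟨(pow_le_pow_iff_left₀ (by positivity [frobNorm_nonneg D]) (frobNorm_nonneg _)
      two_ne_zero).1 hlow,
    (pow_le_pow_iff_left₀ (frobNorm_nonneg _) (by positivity [frobNorm_nonneg D])
      two_ne_zero).1 hup⟩

end

/-- Let `Θ` be symmetric positive definite with smallest eigenvalue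
`λ_min` and largest eigenvalue `λ_max`, `A = Θ⁻¹`, and `L` invertible with `L Lᵀ = A`.
Then for every matrix `M`,
`λ_min ‖A − MMᵀ‖_F ≤ ‖Id − L⁻¹ M Mᵀ L⁻ᵀ‖_F ≤ λ_max ‖A − MMᵀ‖_F`. -/
theorem frobNorm_conj_bounds
    {N : ℕ} (Θ : Matrix (Fin N) (Fin N) ℝ) (hΘ : Θ.PosDef)
    (lmin lmax : ℝ)
    (hmin : IsLeast (Set.range hΘ.isHermitian.eigenvalues) lmin)
    (hmax : IsGreatest (Set.range hΘ.isHermitian.eigenvalues) lmax)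
    (L : Matrix (Fin N) (Fin N) ℝ) (hL : IsUnit L.det)
    (hLL : L * Lᵀ = Θ⁻¹)
    (M : Matrix (Fin N) (Fin N) ℝ) :
    lmin * frobNorm (Θ⁻¹ - M * Mᵀ) ≤
        frobNorm (1 - L⁻¹ * (M * Mᵀ) * (Lᵀ)⁻¹) ∧
      frobNorm (1 - L⁻¹ * (M * Mᵀ) * (Lᵀ)⁻¹) ≤
        lmax * frobNorm (Θ⁻¹ - M * Mᵀ) := by
  have hK : (L⁻¹)ᵀ * L⁻¹ = Θ := by
    rw [transpose_nonsing_inv, ← Matrix.mul_inv_rev, hLL,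
      nonsing_inv_nonsing_inv Θ ((isUnit_iff_isUnit_det Θ).1 hΘ.isUnit)]
  have hD : (Θ⁻¹ - M * Mᵀ).IsSymm :=
    (isHermitian_iff_isSymm.1 hΘ.isHermitian).inv.sub (isSymm_mul_transpose_self M)
  have hX : 1 - L⁻¹ * (M * Mᵀ) * (Lᵀ)⁻¹ = L⁻¹ * (Θ⁻¹ - M * Mᵀ) * (L⁻¹)ᵀ := by
    rw [transpose_nonsing_inv, mul_sub, sub_mul, ← hLL, ← mul_assoc L⁻¹ L, nonsing_inv_mul L hL,
      one_mul, mul_nonsing_inv Lᵀ (by rwa [det_transpose])]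
  have hmin_pos : 0 < lmin := by
    obtain ⟨i, rfl⟩ := hmin.1
    exact hΘ.eigenvalues_pos i
  rw [hX]
  exact frobNorm_mul_mul_transpose_bounds hΘ.isHermitian hK hD hmin_pos.le (hmin.2 hmax.1)
    (fun i => hmin.2 ⟨i, rfl⟩) (fun i => hmax.2 ⟨i, rfl⟩)

end
end

section
/- There exists a universal constant C > 0 (independent of N, Θ, and M) such that the following holds: for every N×N symmetric positive-definite real matrix Θ with largest eigenvalue λ_max, setting A := Θ⁻¹, and every N×N real matrix M with M Mᵀ positive definite, if λ_max · ‖A − M Mᵀ‖_F ≤ C, then 𝒟(Θ, (M Mᵀ)⁻¹) ≤ λ_max · ‖A − M Mᵀ‖_F. -/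
open Matrix

noncomputable section

/-! With `R = Θ^{1/2}` and `B = M Mᵀ`, the whitened matrix `T = R B R` has
`𝒟(Θ, B⁻¹) = ½ Σᵢ (μᵢ - 1 - log μᵢ)` over its eigenvalues `μᵢ`, and `1 - T = R (Θ⁻¹ - B) R`, so
`Σᵢ (μᵢ - 1)² = tr((Θ⁻¹ - B) Θ (Θ⁻¹ - B) Θ) ≤ (λ_max ‖Θ⁻¹ - B‖_F)² =: δ²`. If `δ ≤ 1/2`, every
`μᵢ ≥ 1/2`, and there `μ - 1 - log μ ≤ 2 (μ - 1)²`; hence `𝒟 ≤ δ² ≤ δ`, so `C = 1/2` works. -/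

open scoped MatrixOrder

lemma Real.sub_one_sub_log_le_two_mul_sq {x : ℝ} (hx : 1 / 2 ≤ x) :
    x - 1 - Real.log x ≤ 2 * (x - 1) ^ 2 := by
  have hx₀ : 0 < x := by linarith
  have hlog : -Real.log x ≤ x⁻¹ - 1 := by
    simpa [Real.log_inv] using Real.log_le_sub_one_of_pos (inv_pos.mpr hx₀)
  have hinv : x⁻¹ ≤ 2 := by rw [inv_le_comm₀ hx₀ two_pos]; linarith
  have hsq : x - 2 + x⁻¹ = (x - 1) ^ 2 * x⁻¹ := by field_simp; ring
  nlinarith [mul_le_mul_of_nonneg_left hinv (sq_nonneg (x - 1))]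

lemma Real.sum_sub_one_sub_log_le_sum_sq {ι : Type*} [Fintype ι] {μ : ι → ℝ}
    (h : ∑ i, (μ i - 1) ^ 2 ≤ 1 / 4) :
    (∑ i, (μ i - 1 - Real.log (μ i))) / 2 ≤ ∑ i, (μ i - 1) ^ 2 := by
  have hμ : ∀ i, 1 / 2 ≤ μ i := fun i => by
    have : (μ i - 1) ^ 2 ≤ 1 / 4 :=
      (Finset.single_le_sum (fun j _ => sq_nonneg (μ j - 1)) (Finset.mem_univ i)).trans h
    nlinarith
  have := Finset.sum_le_sum fun i (_ : i ∈ Finset.univ) => sub_one_sub_log_le_two_mul_sq (hμ i)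
  rw [← Finset.mul_sum] at this
  linarith

namespace Matrix

variable {n : Type*} [Fintype n] [DecidableEq n]

lemma PosSemidef.trace_mul_nonneg {A B : Matrix n n ℝ} (hA : A.PosSemidef) (hB : B.PosSemidef) :
    0 ≤ (A * B).trace := by
  set S := CFC.sqrt B
  have hS : Sᴴ = S := (nonneg_iff_posSemidef.mp (CFC.sqrt_nonneg B)).isHermitian
  have hSS : S * S = B := CFC.sqrt_mul_sqrt_self B hB.nonneg
  have hSAS : (S * A * S).PosSemidef := by
    have h := hA.conjTranspose_mul_mul_same S
    rwa [hS] at h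
  rw [← hSS, ← mul_assoc, trace_mul_cycle]
  exact hSAS.trace_nonneg

lemma PosSemidef.trace_mul_le_of_le_smul_one {A B : Matrix n n ℝ} (hA : A.PosSemidef) {c : ℝ}
    (hB : B ≤ c • 1) :
    (A * B).trace ≤ c * A.trace := by
  have h := hA.trace_mul_nonneg hB
  rw [Matrix.mul_sub, trace_sub, Matrix.mul_smul, mul_one, trace_smul, smul_eq_mul] at h
  linarith

lemma IsHermitian.le_smul_one_of_eigenvalues_le {A : Matrix n n ℝ} (hA : A.IsHermitian) {c : ℝ}
    (h : ∀ i, hA.eigenvalues i ≤ c) : A ≤ c • 1 := by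
  rw [← Algebra.algebraMap_eq_smul_one]
  refine le_algebraMap_of_spectrum_le (fun x hx => ?_) (isHermitian_iff_isSelfAdjoint.mp hA)
  obtain ⟨i, rfl⟩ := hA.spectrum_real_eq_range_eigenvalues ▸ hx
  exact h i

lemma IsHermitian.trace_mul_mul_mul_le {E Θ : Matrix n n ℝ} (hE : E.IsHermitian)
    (hΘ : Θ.PosSemidef) {c : ℝ} (hΘc : Θ ≤ c • 1) :
    (E * Θ * E * Θ).trace ≤ c ^ 2 * (E * E).trace := by
  have hEΘE : (E * Θ * E).PosSemidef := by
    have h := hΘ.conjTranspose_mul_mul_same E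
    rwa [hE.eq] at h
  have hEE : (E * E).PosSemidef := by
    have h := posSemidef_conjTranspose_mul_self E
    rwa [hE.eq] at h
  have h₁ := hEΘE.trace_mul_le_of_le_smul_one hΘc
  have h₂ : (E * Θ * E).trace ≤ c * (E * E).trace := by
    rw [mul_assoc, trace_mul_comm, mul_assoc, trace_mul_comm]
    exact hEE.trace_mul_le_of_le_smul_one hΘc
  rcases le_or_gt 0 c with hc | hc
  · nlinarith [mul_le_mul_of_nonneg_left h₂ hc]
  · nlinarith [hEΘE.trace_nonneg, hEE.trace_nonneg]

lemma IsHermitian.trace_mul_self_eq_sum_sq_eigenvalues {A : Matrix n n ℝ} (hA : A.IsHermitian) :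
    (A * A).trace = ∑ i, hA.eigenvalues i ^ 2 := by
  set U : Matrix n n ℝ := (hA.eigenvectorUnitary : Matrix n n ℝ)
  set D : Matrix n n ℝ := diagonal (RCLike.ofReal ∘ hA.eigenvalues)
  have hU : star U * U = 1 := Unitary.coe_star_mul_self _
  have hA' : A = U * D * star U := by
    conv_lhs => rw [hA.spectral_theorem, Unitary.conjStarAlgAut_apply]
  have : A * A = U * (D * D) * star U := by
    rw [hA']
    simp only [mul_assoc, ← mul_assoc (star U) U, hU, one_mul]
  rw [this, trace_mul_cycle, hU, one_mul, diagonal_mul_diagonal, trace_diagonal]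
  simp [sq]

lemma IsHermitian.sum_sq_eigenvalues_sub_one {A : Matrix n n ℝ} (hA : A.IsHermitian) :
    ∑ i, (hA.eigenvalues i - 1) ^ 2 = ((1 - A) * (1 - A)).trace := by
  have hexp : (1 - A) * (1 - A) = 1 - 2 • A + A * A := by noncomm_ring
  simp only [sub_sq, Finset.sum_add_distrib, Finset.sum_sub_distrib, ← Finset.sum_mul,
    ← Finset.mul_sum, hexp, trace_add, trace_sub, trace_one, trace_smul,
    hA.trace_mul_self_eq_sum_sq_eigenvalues, hA.trace_eq_sum_eigenvalues]
  simp only [mul_one, one_pow, Finset.sum_const, Finset.card_univ, nsmul_eq_mul,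
    Real.ringHom_apply, Nat.cast_ofNat]
  ring

lemma PosDef.trace_sub_log_det_sub_card {A : Matrix n n ℝ} (hA : A.PosDef) :
    A.trace - Real.log A.det - Fintype.card n
      = ∑ i, (hA.isHermitian.eigenvalues i - 1 - Real.log (hA.isHermitian.eigenvalues i)) := by
  rw [hA.isHermitian.trace_eq_sum_eigenvalues, hA.isHermitian.det_eq_prod_eigenvalues]
  simp only [RCLike.ofReal_real_eq_id, id]
  rw [Real.log_prod fun i _ => (hA.eigenvalues_pos i).ne', Finset.sum_sub_distrib,
    Finset.sum_sub_distrib, Finset.sum_const, Finset.card_univ, nsmul_one]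
  ring

lemma PosDef.sqrt_mul_inv_mul_sqrt {Θ : Matrix n n ℝ} (hΘ : Θ.PosDef) :
    CFC.sqrt Θ * Θ⁻¹ * CFC.sqrt Θ = 1 := by
  have hRR : CFC.sqrt Θ * CFC.sqrt Θ = Θ := CFC.sqrt_mul_sqrt_self Θ hΘ.posSemidef.nonneg
  have hR : IsUnit (CFC.sqrt Θ).det := by
    refine isUnit_of_mul_isUnit_left (y := (CFC.sqrt Θ).det) ?_
    rw [← det_mul, hRR]
    exact (isUnit_iff_isUnit_det Θ).mp hΘ.isUnit
  generalize CFC.sqrt Θ = R at hRR hR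
  subst hRR
  rw [Matrix.mul_inv_rev, ← mul_assoc, mul_nonsing_inv _ hR, one_mul, nonsing_inv_mul _ hR]

lemma PosDef.one_sub_sqrt_mul_mul_sqrt {Θ : Matrix n n ℝ} (hΘ : Θ.PosDef)
    (B : Matrix n n ℝ) :
    1 - CFC.sqrt Θ * B * CFC.sqrt Θ = CFC.sqrt Θ * (Θ⁻¹ - B) * CFC.sqrt Θ := by
  rw [Matrix.mul_sub, Matrix.sub_mul, hΘ.sqrt_mul_inv_mul_sqrt]

lemma PosSemidef.trace_sqrt_mul_mul_sqrt_sq {Θ : Matrix n n ℝ} (hΘ : Θ.PosSemidef)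
    (E : Matrix n n ℝ) :
    ((CFC.sqrt Θ * E * CFC.sqrt Θ) * (CFC.sqrt Θ * E * CFC.sqrt Θ)).trace
      = (E * Θ * E * Θ).trace := by
  have hRR : CFC.sqrt Θ * CFC.sqrt Θ = Θ := CFC.sqrt_mul_sqrt_self Θ hΘ.nonneg
  generalize CFC.sqrt Θ = R at hRR
  subst hRR
  simp only [mul_assoc]
  rw [trace_mul_comm]
  simp only [mul_assoc]

lemma PosDef.sqrt_mul_mul_sqrt {Θ B : Matrix n n ℝ} (hΘ : Θ.PosDef) (hB : B.PosDef) :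
    (CFC.sqrt Θ * B * CFC.sqrt Θ).PosDef := by
  have hR : Function.Injective (CFC.sqrt Θ).mulVec :=
    mulVec_injective_iff_isUnit.mpr ((CFC.isUnit_sqrt_iff Θ hΘ.posSemidef.nonneg).mpr hΘ.isUnit)
  have h := hB.conjTranspose_mul_mul_same hR
  rwa [(nonneg_iff_posSemidef.mp (CFC.sqrt_nonneg Θ)).isHermitian.eq] at h

end Matrix

lemma sq_frobNorm {m n : Type*} [Fintype m] [Fintype n] (A : Matrix m n ℝ) :
    frobNorm A ^ 2 = (A * Aᵀ).trace := by
  rw [frobNorm, Real.sq_sqrt (by positivity)]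
  simp only [trace, diag, mul_apply, transpose_apply, sq]

lemma gaussKL_inv_eq_sum {N : ℕ} {Θ B : Matrix (Fin N) (Fin N) ℝ} (hΘ : Θ.PosDef)
    (hB : B.PosDef) :
    gaussKL Θ B⁻¹ = (∑ i, ((hΘ.sqrt_mul_mul_sqrt hB).isHermitian.eigenvalues i - 1
      - Real.log ((hΘ.sqrt_mul_mul_sqrt hB).isHermitian.eigenvalues i))) / 2 := by
  have hRR : CFC.sqrt Θ * CFC.sqrt Θ = Θ := CFC.sqrt_mul_sqrt_self Θ hΘ.posSemidef.nonneg
  have htr : (CFC.sqrt Θ * B * CFC.sqrt Θ).trace = (B * Θ).trace := by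
    rw [trace_mul_cycle, hRR, trace_mul_comm]
  have hdet : (CFC.sqrt Θ * B * CFC.sqrt Θ).det = Θ.det * B.det := by
    have hΘdet : Θ.det = (CFC.sqrt Θ).det * (CFC.sqrt Θ).det := by rw [← det_mul, hRR]
    rw [det_mul, det_mul, hΘdet]; ring
  rw [← (hΘ.sqrt_mul_mul_sqrt hB).trace_sub_log_det_sub_card, htr, hdet, Fintype.card_fin,
    gaussKL, nonsing_inv_nonsing_inv _ ((isUnit_iff_isUnit_det B).mp hB.isUnit),
    det_nonsing_inv, Ring.inverse_eq_inv, Real.log_inv,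
    Real.log_mul hΘ.det_pos.ne' hB.det_pos.ne']
  ring

/-- There is a universal constant `C > 0` (independent of `N`, `Θ`, `M`)
such that: for every symmetric positive-definite `Θ` with largest eigenvalue `λ_max`,
`A = Θ⁻¹`, and every `M` with `M Mᵀ` positive definite, if
`λ_max ‖A − M Mᵀ‖_F ≤ C` then `𝒟(Θ, (M Mᵀ)⁻¹) ≤ λ_max ‖A − M Mᵀ‖_F`. -/
theorem gaussKL_le_of_frobNorm_small :
    ∃ C : ℝ, 0 < C ∧
      ∀ (N : ℕ) (Θ : Matrix (Fin N) (Fin N) ℝ) (hΘ : Θ.PosDef) (lmax : ℝ),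
        IsGreatest (Set.range hΘ.isHermitian.eigenvalues) lmax →
        ∀ M : Matrix (Fin N) (Fin N) ℝ, (M * Mᵀ).PosDef →
          lmax * frobNorm (Θ⁻¹ - M * Mᵀ) ≤ C →
          gaussKL Θ ((M * Mᵀ)⁻¹) ≤ lmax * frobNorm (Θ⁻¹ - M * Mᵀ) := by
  refine ⟨1 / 2, one_half_pos, fun N Θ hΘ lmax hlmax M hB hsmall => ?_⟩
  set E := Θ⁻¹ - M * Mᵀ
  have hE : E.IsHermitian := hΘ.isHermitian.inv.sub hB.isHermitian
  have hT := hΘ.sqrt_mul_mul_sqrt hB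
  have hΘle : Θ ≤ lmax • 1 :=
    hΘ.isHermitian.le_smul_one_of_eigenvalues_le fun i => hlmax.2 ⟨i, rfl⟩
  have hlmax_pos : 0 < lmax := by
    obtain ⟨i, rfl⟩ := hlmax.1
    exact hΘ.eigenvalues_pos i
  have hδ : 0 ≤ lmax * frobNorm E := mul_nonneg hlmax_pos.le (Real.sqrt_nonneg _)
  have hdev : ∑ i, (hT.isHermitian.eigenvalues i - 1) ^ 2 ≤ (lmax * frobNorm E) ^ 2 := by
    rw [hT.isHermitian.sum_sq_eigenvalues_sub_one, hΘ.one_sub_sqrt_mul_mul_sqrt,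
      hΘ.posSemidef.trace_sqrt_mul_mul_sqrt_sq, mul_pow, sq_frobNorm,
      ← conjTranspose_eq_transpose_of_trivial E, hE.eq]
    exact hE.trace_mul_mul_mul_le hΘ.posSemidef hΘle
  rw [gaussKL_inv_eq_sum hΘ hB]
  calc _ ≤ ∑ i, (hT.isHermitian.eigenvalues i - 1) ^ 2 :=
        Real.sum_sub_one_sub_log_le_sum_sq (hdev.trans (by nlinarith))
    _ ≤ (lmax * frobNorm E) ^ 2 := hdev
    _ ≤ lmax * frobNorm E := by nlinarith

end
end

section
/- Let Θ be an n×n symmetric positive-definite real matrix and U an n×n upper-triangular matrix with positive diagonal entries such that Θ = U Uᵀ. Fix k ∈ {1, …, n} and let s := {k, k+1, …, n}. Then Θ_{s,s}⁻¹ e₁ / √( e₁ᵀ Θ_{s,s}⁻¹ e₁ ) = (U⁻ᵀ e_k)_s, where e₁ is the first standard basis vector of ℝ^{s} (corresponding to index k), e_k is the k-th standard basis vector of ℝ^n, and (U⁻ᵀ e_k)_s is the restriction of the vector U⁻ᵀ e_k to the indices in s. In particular, the sparsity-constrained KL-optimal column with column sparsity set s equals the k-th column of U⁻ᵀ restricted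 to s. -/
/-!
The vector `w = U⁻ᵀ e_k` is the `k`-th row of `U⁻¹`, which is upper triangular, so `w`
vanishes off `s`. Hence `Θ_{s,s} w_s = (Θ w)_s = (U e_k)_s = U_kk e₁`, i.e.
`Θ_{s,s}⁻¹ e₁ = w_s / U_kk`, and `e₁ᵀ Θ_{s,s}⁻¹ e₁ = w_k / U_kk = U_kk⁻²`.
-/

open Matrix

noncomputable section

/-- The trailing principal submatrix `X_{s,s}` of `X` for `s = {k, …, n}`. -/
def trailSub {n : ℕ} (X : Matrix (Fin n) (Fin n) ℝ) (k : Fin n) :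
    Matrix {i : Fin n // k ≤ i} {i : Fin n // k ≤ i} ℝ :=
  X.submatrix Subtype.val Subtype.val

/-- The restriction `v_s` of a vector `v` to the indices `s = {k, …, n}`. -/
def trailVec {n : ℕ} (v : Fin n → ℝ) (k : Fin n) : {i : Fin n // k ≤ i} → ℝ :=
  fun i => v i.val

/-- The standard basis vector `e₁` of `ℝ^s`, `s = {k, …, n}`, corresponding to index `k`. -/
def trailE1 {n : ℕ} (k : Fin n) : {i : Fin n // k ≤ i} → ℝ :=
  Pi.single ⟨k, le_refl k⟩ 1

namespace Matrix

theorem submatrix_val_mulVec_of_support {ι R : Type*} [Fintype ι] [NonUnitalNonAssocSemiring R]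
    {p : ι → Prop} [DecidablePred p] (A : Matrix ι ι R) {v : ι → R}
    (hv : ∀ i, ¬ p i → v i = 0) :
    A.submatrix (Subtype.val : Subtype p → ι) Subtype.val *ᵥ (fun i : Subtype p => v i) =
      fun i : Subtype p => (A *ᵥ v) i := by
  funext i
  simp only [mulVec, dotProduct, submatrix_apply]
  rw [← Fintype.sum_subtype_add_sum_subtype p,
    Fintype.sum_eq_zero (fun j : {j // ¬ p j} => A i j * v j) (fun j => by rw [hv j j.2, mul_zero]),
    add_zero]

variable {ι K : Type*} [Fintype ι] [DecidableEq ι] [Field K]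

theorem inv_mulVec_eq_inv_smul_of_mulVec_eq_smul {T : Matrix ι ι K} (hT : IsUnit T.det)
    {w e : ι → K} {c : K} (hc : c ≠ 0) (h : T *ᵥ w = c • e) : T⁻¹ *ᵥ e = c⁻¹ • w := by
  have := T.invertibleOfIsUnitDet hT
  refine inv_mulVec_eq_vec ?_
  rw [mulVec_smul, h, smul_smul, inv_mul_cancel₀ hc, one_smul]

theorem transpose_inv_mulVec_single_one (A : Matrix ι ι K) (k : ι) :
    (Aᵀ)⁻¹ *ᵥ Pi.single k 1 = fun i => A⁻¹ k i := by
  funext i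
  rw [mulVec_single_one, ← transpose_nonsing_inv, col_apply, transpose_apply]

theorem IsUpperTriangular.inv_apply_self [LinearOrder ι] {U : Matrix ι ι K}
    (hU : U.IsUpperTriangular) (hdet : IsUnit U.det) (k : ι) : U⁻¹ k k = (U k k)⁻¹ := by
  have := U.invertibleOfIsUnitDet hdet
  have hinv : U⁻¹.IsUpperTriangular := blockTriangular_inv_of_blockTriangular hU
  have hkk : (U⁻¹ * U) k k = 1 := by rw [nonsing_inv_mul U hdet, one_apply_eq]
  rw [mul_apply, Finset.sum_eq_single k (fun j _ hj => ?_) (by simp)] at hkk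
  · exact eq_inv_of_mul_eq_one_left hkk
  rcases hj.lt_or_gt with h | h
  · rw [hinv h, zero_mul]
  · rw [hU h, mul_zero]

end Matrix

section

variable {n : ℕ} {U : Matrix (Fin n) (Fin n) ℝ}

theorem trailVec_mulVec_single_one (hU : U.IsUpperTriangular) (k : Fin n) :
    trailVec (U *ᵥ Pi.single k 1) k = U k k • trailE1 k := by
  funext i
  obtain ⟨i, hki⟩ := i
  rcases hki.eq_or_lt with rfl | hlt
  · simp [trailVec, trailE1]
  · simp [trailVec, trailE1, hU hlt, hlt.ne']

theorem trailSub_mul_transpose_mulVec_trailVec (hU : U.IsUpperTriangular) (hdet : IsUnit U.det)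
    (k : Fin n) :
    trailSub (U * Uᵀ) k *ᵥ trailVec ((Uᵀ)⁻¹ *ᵥ Pi.single k 1) k = U k k • trailE1 k := by
  have := U.invertibleOfIsUnitDet hdet
  have hsupp : ∀ i, ¬ k ≤ i → ((Uᵀ)⁻¹ *ᵥ Pi.single k 1) i = 0 := fun i hi => by
    rw [transpose_inv_mulVec_single_one]
    exact blockTriangular_inv_of_blockTriangular hU (not_le.mp hi)
  unfold trailSub trailVec
  rw [submatrix_val_mulVec_of_support _ hsupp, mulVec_mulVec, mul_inv_cancel_right_of_invertible]
  exact trailVec_mulVec_single_one hU k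

end

/-- If `Θ = U Uᵀ` with `U` upper triangular with positive diagonal, and
`s = {k, …, n}`, then `Θ_{s,s}⁻¹ e₁ / √(e₁ᵀ Θ_{s,s}⁻¹ e₁) = (U⁻ᵀ e_k)_s`: the
sparsity-constrained KL-optimal column with column sparsity set `s` equals the `k`-th
column of `U⁻ᵀ` restricted to `s`. -/
theorem klOptimal_column_eq_inv_transpose_column
    {n : ℕ} (Θ U : Matrix (Fin n) (Fin n) ℝ) (hΘ : Θ.PosDef)
    (hUt : ∀ i j : Fin n, j < i → U i j = 0)
    (hUd : ∀ i : Fin n, 0 < U i i)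
    (hfact : Θ = U * Uᵀ) (k : Fin n) :
    (fun i : {i : Fin n // k ≤ i} =>
        ((trailSub Θ k)⁻¹ *ᵥ trailE1 k) i /
          Real.sqrt (trailE1 k ⬝ᵥ ((trailSub Θ k)⁻¹ *ᵥ trailE1 k))) =
      trailVec ((Uᵀ)⁻¹ *ᵥ Pi.single k 1) k := by
  have hU : U.IsUpperTriangular := fun i j h => hUt i j h
  have hdet : IsUnit U.det := by
    rw [det_of_isUpperTriangular hU]
    exact (Finset.prod_pos fun i _ => hUd i).ne'.isUnit
  have hT : IsUnit (trailSub Θ k).det :=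
    (hΘ.submatrix Subtype.val_injective).det_pos.ne'.isUnit
  have hcol := inv_mulVec_eq_inv_smul_of_mulVec_eq_smul hT (hUd k).ne'
    (hfact ▸ trailSub_mul_transpose_mulVec_trailVec hU hdet k)
  have hpivot : trailVec ((Uᵀ)⁻¹ *ᵥ Pi.single k 1) k ⟨k, le_rfl⟩ = (U k k)⁻¹ := by
    rw [trailVec, transpose_inv_mulVec_single_one]
    exact hU.inv_apply_self hdet k
  have hnorm : Real.sqrt (trailE1 k ⬝ᵥ ((trailSub Θ k)⁻¹ *ᵥ trailE1 k)) = (U k k)⁻¹ := by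
    rw [hcol, trailE1, single_one_dotProduct, Pi.smul_apply, hpivot, smul_eq_mul,
      Real.sqrt_mul_self (inv_pos.mpr (hUd k)).le]
  funext i
  rw [hnorm, hcol, Pi.smul_apply, smul_eq_mul, mul_div_cancel_left₀ _ (inv_ne_zero (hUd k).ne')]

end
end

section
/- Let M = [[A, C],[Cᵀ, D]] be a symmetric positive-definite real matrix with blocks A ∈ ℝ^{m×m}, C ∈ ℝ^{m×p}, D ∈ ℝ^{p×p}. Suppose A = U Uᵀ with U ∈ ℝ^{m×m} upper triangular with positive diagonal entries, and set B := U⁻¹ C. Then D − Bᵀ B is positive definite, and the first column of M⁻¹ is given blockwise by M⁻¹ (e₁; 0) = (1/U₁₁) · ( U⁻ᵀ w ; −D⁻¹ Bᵀ w ), where w := e₁ + B (D − Bᵀ B)⁻¹ Bᵀ e₁, e₁ ∈ ℝ^m is the first standard basis vector, and (x; y) denotes the concatenation of x ∈ ℝ^m and y ∈ ℝ^p. -/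
/-!
Write `C = U B` and let `S = D − BᵀB`, which is the Schur complement `D − Cᵀ A⁻¹ C` of `A`.
With `z = S⁻¹ Bᵀ e₁` and `w = e₁ + B z` one has `Bᵀ w = (S + BᵀB) z = D z`, so `D⁻¹ Bᵀ w = z`, and
`M` maps `(U⁻ᵀ w ; −z)` to `(U (w − B z) ; Bᵀ w − D z) = (U e₁ ; 0) = U₁₁ (e₁ ; 0)`, the last step
because `U` is upper triangular.
-/

open Matrix

noncomputable section

namespace Matrix

variable {m n R : Type*}

theorem PosDef.toBlocks₁₁ [Ring R] [PartialOrder R] [StarRing R] {M : Matrix (m ⊕ n) (m ⊕ n) R}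
    (hM : M.PosDef) : M.toBlocks₁₁.PosDef :=
  hM.submatrix Sum.inl_injective

theorem PosDef.toBlocks₂₂ [Ring R] [PartialOrder R] [StarRing R] {M : Matrix (m ⊕ n) (m ⊕ n) R}
    (hM : M.PosDef) : M.toBlocks₂₂.PosDef :=
  hM.submatrix Sum.inr_injective

theorem IsUpperTriangular.mulVec_single_zero [NonAssocSemiring R] {k : ℕ} [NeZero k]
    {U : Matrix (Fin k) (Fin k) R} (hU : U.IsUpperTriangular) :
    U *ᵥ Pi.single 0 1 = U 0 0 • Pi.single 0 1 := by
  ext i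
  rcases eq_or_ne i 0 with rfl | hi
  · simp
  · simp [hU (Fin.pos_iff_ne_zero.2 hi), hi]

variable [Fintype m] [DecidableEq m]

theorem IsUpperTriangular.isUnit_det [CommRing R] [LinearOrder m] {U : Matrix m m R}
    (hU : U.IsUpperTriangular) (hd : ∀ i, IsUnit (U i i)) : IsUnit U.det := by
  rw [det_of_isUpperTriangular hU]
  exact IsUnit.prod_univ_iff.2 hd

theorem transpose_inv_mul_mul_inv_mul [CommRing R] (U : Matrix m m R) (C : Matrix m n R) :
    (U⁻¹ * C)ᵀ * (U⁻¹ * C) = Cᵀ * (U * Uᵀ)⁻¹ * C := by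
  rw [transpose_mul, transpose_nonsing_inv, mul_inv_rev]
  simp only [Matrix.mul_assoc]

variable [Fintype n]

theorem PosDef.schur_complement_fromBlocks₁₁ {K : Type*} [Field K]
    [PartialOrder K] [StarRing K] {A : Matrix m m K} {B : Matrix m n K} {D : Matrix n n K}
    (hM : (fromBlocks A B Bᴴ D).PosDef) : (D - Bᴴ * A⁻¹ * B).PosDef := by
  have hA : A.PosDef := by simpa using hM.toBlocks₁₁
  have := hA.isUnit.invertible
  refine of_dotProduct_mulVec_pos ((IsHermitian.fromBlocks₁₁ B D hA.1).1 hM.1) fun y hy => ?_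
  -- on `(-A⁻¹ B y ; y)` the quadratic form of `M` reduces to that of the Schur complement
  have hv : -((A⁻¹ * B) *ᵥ y) ⊕ᵥ y ≠ 0 := fun h => hy (funext fun j => congrFun h (Sum.inr j))
  have hpos := hM.dotProduct_mulVec_pos hv
  rwa [dotProduct_mulVec, schur_complement_eq₁₁ B D _ _ hA.1, neg_add_cancel, star_zero,
    zero_vecMul, zero_dotProduct, zero_add, ← dotProduct_mulVec] at hpos

theorem fromBlocks_mulVec_woodbury [DecidableEq n] [CommRing R]
    {U : Matrix m m R} {B : Matrix m n R} {D : Matrix n n R}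
    (hU : IsUnit U.det) (hD : IsUnit D.det) (hS : IsUnit (D - Bᵀ * B).det) (e : m → R) :
    let w := e + B *ᵥ ((D - Bᵀ * B)⁻¹ *ᵥ (Bᵀ *ᵥ e))
    fromBlocks (U * Uᵀ) (U * B) (U * B)ᵀ D *ᵥ (Uᵀ⁻¹ *ᵥ w ⊕ᵥ -(D⁻¹ *ᵥ (Bᵀ *ᵥ w))) =
      U *ᵥ e ⊕ᵥ 0 := by
  intro w
  set z := (D - Bᵀ * B)⁻¹ *ᵥ (Bᵀ *ᵥ e)
  have hSz : (D - Bᵀ * B) *ᵥ z = Bᵀ *ᵥ e := by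
    rw [mulVec_mulVec, mul_nonsing_inv _ hS, one_mulVec]
  have hBw : Bᵀ *ᵥ w = D *ᵥ z := by
    rw [mulVec_add, mulVec_mulVec, ← sub_add_cancel D (Bᵀ * B), add_mulVec, hSz, sub_add_cancel]
  have hDz : D⁻¹ *ᵥ (Bᵀ *ᵥ w) = z := by
    rw [hBw, mulVec_mulVec, nonsing_inv_mul _ hD, one_mulVec]
  have hUt : Uᵀ * Uᵀ⁻¹ = 1 := mul_nonsing_inv _ (isUnit_det_transpose U hU)
  rw [hDz, fromBlocks_mulVec, Sum.elim_comp_inl, Sum.elim_comp_inr]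
  congr 1
  · rw [mulVec_mulVec, Matrix.mul_assoc, hUt, Matrix.mul_one, ← mulVec_mulVec, ← mulVec_add,
      mulVec_neg, add_neg_cancel_right]
  · rw [mulVec_mulVec, transpose_mul, Matrix.mul_assoc, hUt, Matrix.mul_one, mulVec_neg, hBw,
      add_neg_cancel]

end Matrix

/-- Let `M = [[A, C],[Cᵀ, D]]` be symmetric positive definite,
`A = U Uᵀ` with `U` upper triangular with positive diagonal, and `B = U⁻¹ C`. Then the
Schur complement `D − Bᵀ B` is positive definite, and the first column of `M⁻¹` satisfies
`M⁻¹ (e₁; 0) = (1/U₁₁) (U⁻ᵀ w ; −D⁻¹ Bᵀ w)` with `w = e₁ + B (D − BᵀB)⁻¹ Bᵀ e₁`. -/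
theorem first_column_of_block_inverse
    {m p : ℕ} [NeZero m]
    (A : Matrix (Fin m) (Fin m) ℝ) (C : Matrix (Fin m) (Fin p) ℝ)
    (D : Matrix (Fin p) (Fin p) ℝ)
    (hM : (Matrix.fromBlocks A C Cᵀ D).PosDef)
    (U : Matrix (Fin m) (Fin m) ℝ)
    (hUt : ∀ i j : Fin m, j < i → U i j = 0)
    (hUd : ∀ i : Fin m, 0 < U i i)
    (hA : A = U * Uᵀ) :
    let B : Matrix (Fin m) (Fin p) ℝ := U⁻¹ * C
    let w : Fin m → ℝ :=
      Pi.single (0 : Fin m) 1 +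
        B *ᵥ ((D - Bᵀ * B)⁻¹ *ᵥ (Bᵀ *ᵥ Pi.single (0 : Fin m) 1))
    (D - Bᵀ * B).PosDef ∧
    (Matrix.fromBlocks A C Cᵀ D)⁻¹ *ᵥ
        Sum.elim (Pi.single (0 : Fin m) 1) (0 : Fin p → ℝ) =
      (U 0 0)⁻¹ • Sum.elim ((Uᵀ)⁻¹ *ᵥ w) (-(D⁻¹ *ᵥ (Bᵀ *ᵥ w))) := by
  intro B w
  have hUtri : U.IsUpperTriangular := fun i j h => hUt i j h
  have hU : IsUnit U.det := hUtri.isUnit_det fun i => (hUd i).ne'.isUnit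
  have hS : (D - Bᵀ * B).PosDef := by
    rw [transpose_inv_mul_mul_inv_mul, ← hA, ← conjTranspose_eq_transpose_of_trivial]
    exact PosDef.schur_complement_fromBlocks₁₁ (by rwa [conjTranspose_eq_transpose_of_trivial])
  have hD : D.PosDef := by simpa using hM.toBlocks₂₂
  have hC : U * B = C := mul_nonsing_inv_cancel_left U C hU
  have := hM.isUnit.invertible
  refine ⟨hS, inv_mulVec_eq_vec ?_⟩
  rw [mulVec_smul, hA, ← hC, fromBlocks_mulVec_woodbury hU ((isUnit_iff_isUnit_det D).1 hD.isUnit)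
    ((isUnit_iff_isUnit_det _).1 hS.isUnit), hUtri.mulVec_single_zero]
  ext (i | j) <;> simp [(hUd 0).ne']

end
end
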